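/- arXiv:2303.06688 — 6 statements merged into one kernel-verified Lean document; each statement's English description precedes it below -/
import Mathlib

section
/- For every ξ ∈ ℂ³, det M(ξ) = α · (ξᵀεξ) · (ξᵀμξ)². In particular, det M(ξ) = 0 if and only if ξᵀεξ = 0 or ξᵀμξ = 0. -/
open Matrix

/-- The principal symbol `M_H(ξ)` of the decoupled second-order operator for the
magnetic field: `M(ξ) = α (ε⁻¹μξ)(μξ)ᵀ + (ξᵀεξ) I − ξ(εξ)ᵀ`, with
`α = √(det ε / det μ)`, and with the real matrices `ε, μ` regarded as complex ones. -/
noncomputable def MH (ε μ : Matrix (Fin 3) (Fin 3) ℝ) (ξ : Fin 3 → ℂ) :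
    Matrix (Fin 3) (Fin 3) ℂ :=
  (Real.sqrt (ε.det / μ.det) : ℂ) •
      vecMulVec (((ε.map Complex.ofReal)⁻¹ * μ.map Complex.ofReal).mulVec ξ)
        ((μ.map Complex.ofReal).mulVec ξ)
    + (ξ ⬝ᵥ (ε.map Complex.ofReal).mulVec ξ) • (1 : Matrix (Fin 3) (Fin 3) ℂ)
    - vecMulVec ξ ((ε.map Complex.ofReal).mulVec ξ)

/-- Determinant of a rank-two update of a scalar matrix, in dimension 3. -/
lemma det_rank_two_update (q : ℂ) (a b c d : Fin 3 → ℂ) :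
    (q • (1 : Matrix (Fin 3) (Fin 3) ℂ) + vecMulVec a b + vecMulVec c d).det
      = q ^ 3 + q ^ 2 * ((b ⬝ᵥ a) + (d ⬝ᵥ c))
        + q * ((b ⬝ᵥ a) * (d ⬝ᵥ c) - (b ⬝ᵥ c) * (d ⬝ᵥ a)) := by
  simp [Matrix.det_fin_three, vecMulVec_apply, dotProduct, Fin.sum_univ_three,
    Matrix.one_apply, Matrix.smul_apply, Matrix.add_apply]
  ring

lemma mulVec_dot_swap (A : Matrix (Fin 3) (Fin 3) ℂ) (v w : Fin 3 → ℂ) :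
    A.mulVec v ⬝ᵥ w = v ⬝ᵥ Aᵀ.mulVec w := by
  simp [dotProduct, mulVec, Fin.sum_univ_three, Matrix.transpose_apply]
  ring

/-- `det M(ξ) = α (ξᵀεξ)(ξᵀμξ)²`, and `det M(ξ) = 0 ↔ ξᵀεξ = 0 ∨ ξᵀμξ = 0`. -/
theorem det_MH (ε μ : Matrix (Fin 3) (Fin 3) ℝ) (hε : ε.PosDef) (hμ : μ.PosDef)
    (ξ : Fin 3 → ℂ) :
    (MH ε μ ξ).det
        = (Real.sqrt (ε.det / μ.det) : ℂ) * (ξ ⬝ᵥ (ε.map Complex.ofReal).mulVec ξ)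
            * (ξ ⬝ᵥ (μ.map Complex.ofReal).mulVec ξ) ^ 2
      ∧ ((MH ε μ ξ).det = 0 ↔
          ξ ⬝ᵥ (ε.map Complex.ofReal).mulVec ξ = 0
            ∨ ξ ⬝ᵥ (μ.map Complex.ofReal).mulVec ξ = 0) := by
  set α : ℂ := (Real.sqrt (ε.det / μ.det) : ℂ) with hα
  set E : Matrix (Fin 3) (Fin 3) ℂ := ε.map Complex.ofReal with hE
  set m : Matrix (Fin 3) (Fin 3) ℂ := μ.map Complex.ofReal with hm
  set q : ℂ := ξ ⬝ᵥ E.mulVec ξ with hq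
  set t : ℂ := ξ ⬝ᵥ m.mulVec ξ with ht
  -- E is symmetric and invertible
  have hEsym : Eᵀ = E := by
    have h : εᵀ = ε := hε.isHermitian
    rw [hE, ← Matrix.transpose_map, h]
  have hEdet : E.det = (ε.det : ℂ) := by
    rw [hE]
    exact (RingHom.map_det Complex.ofRealHom ε).symm
  have hEdet0 : IsUnit E.det := by
    rw [hEdet]
    exact (Complex.ofReal_ne_zero.mpr (ne_of_gt hε.det_pos)).isUnit
  have hEinv : E * (E⁻¹ * m) = m := by
    rw [← mul_assoc, Matrix.mul_nonsing_inv E hEdet0, one_mul]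
  -- rewrite MH in the rank-two-update form
  have hform : MH ε μ ξ
      = q • (1 : Matrix (Fin 3) (Fin 3) ℂ)
        + vecMulVec (α • (E⁻¹ * m).mulVec ξ) (m.mulVec ξ)
        + vecMulVec (-ξ) (E.mulVec ξ) := by
    unfold MH
    ext i j
    simp [vecMulVec_apply, Matrix.smul_apply, Matrix.add_apply, Matrix.sub_apply,
      Matrix.one_apply, ← hE, ← hm, ← hα, ← hq]
    ring
  -- the key dot products
  have hda : E.mulVec ξ ⬝ᵥ (α • (E⁻¹ * m).mulVec ξ) = α * t := by
    rw [dotProduct_smul, smul_eq_mul]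
    congr 1
    rw [mulVec_dot_swap, hEsym, Matrix.mulVec_mulVec, hEinv, ht]
  have hdc : E.mulVec ξ ⬝ᵥ (-ξ) = -q := by
    rw [dotProduct_neg, hq, dotProduct_comm]
  have hbc : m.mulVec ξ ⬝ᵥ (-ξ) = -t := by
    rw [dotProduct_neg, ht, dotProduct_comm]
  have hdet : (MH ε μ ξ).det = α * q * t ^ 2 := by
    rw [hform, det_rank_two_update, hda, hdc, hbc]
    ring
  refine ⟨hdet, ?_⟩
  rw [hdet]
  have hα0 : α ≠ 0 := by
    rw [hα]
    exact Complex.ofReal_ne_zero.mpr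
      (ne_of_gt (Real.sqrt_pos.mpr (div_pos hε.det_pos hμ.det_pos)))
  constructor
  · intro h
    rcases mul_eq_zero.mp h with h1 | h2
    · rcases mul_eq_zero.mp h1 with h3 | h4
      · exact absurd h3 hα0
      · exact Or.inl h4
    · exact Or.inr (sq_eq_zero_iff.mp h2)
  · rintro (h | h) <;> rw [h] <;> ring
end

section
/- For every ξ ∈ ℂ³, the vector χ := (εξ) ×_ℂ (μξ) (the cross product in ℂ³) satisfies M(ξ)·χ = (ξᵀεξ)·χ. That is, (εξ) × (μξ) is an eigenvector of M(ξ) with eigenvalue ξᵀεξ. -/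
open Matrix

theorem MH_mulVec_of_dotProduct_eq_zero (ε μ : Matrix (Fin 3) (Fin 3) ℝ) (ξ w : Fin 3 → ℂ)
    (hε : (ε.map Complex.ofReal).mulVec ξ ⬝ᵥ w = 0)
    (hμ : (μ.map Complex.ofReal).mulVec ξ ⬝ᵥ w = 0) :
    (MH ε μ ξ).mulVec w = (ξ ⬝ᵥ (ε.map Complex.ofReal).mulVec ξ) • w := by
  simp only [MH, sub_mulVec, add_mulVec, smul_mulVec, vecMulVec_mulVec, hε, hμ, one_mulVec,
    MulOpposite.op_zero, zero_smul, smul_zero, zero_add, sub_zero]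

theorem MH_eigenvector_cross_general (ε μ : Matrix (Fin 3) (Fin 3) ℝ) (ξ : Fin 3 → ℂ) :
    (MH ε μ ξ).mulVec
        (crossProduct ((ε.map Complex.ofReal).mulVec ξ) ((μ.map Complex.ofReal).mulVec ξ))
      = (ξ ⬝ᵥ (ε.map Complex.ofReal).mulVec ξ) •
          crossProduct ((ε.map Complex.ofReal).mulVec ξ)
            ((μ.map Complex.ofReal).mulVec ξ) :=
  MH_mulVec_of_dotProduct_eq_zero ε μ ξ _ (dot_self_cross _ _) (dot_cross_self _ _)

/-- `(εξ) × (μξ)` is an eigenvector of `M(ξ)` with eigenvalue `ξᵀεξ`. -/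
theorem MH_eigenvector_cross (ε μ : Matrix (Fin 3) (Fin 3) ℝ) (hε : ε.PosDef)
    (hμ : μ.PosDef) (ξ : Fin 3 → ℂ) :
    (MH ε μ ξ).mulVec
        (crossProduct ((ε.map Complex.ofReal).mulVec ξ) ((μ.map Complex.ofReal).mulVec ξ))
      = (ξ ⬝ᵥ (ε.map Complex.ofReal).mulVec ξ) •
          crossProduct ((ε.map Complex.ofReal).mulVec ξ)
            ((μ.map Complex.ofReal).mulVec ξ) :=
  MH_eigenvector_cross_general ε μ ξ
end

section
/- Let ν := e₃ = (0,0,1) and let ξ ∈ ℂ³ satisfy ξᵀμξ = 0. Set ζ := ε⁻¹μξ, s := ξᵀεξ, m_ξ := ξᵀμε⁻¹μξ, and assume α·m_ξ + s ≠ 0. Define m := −2α·(νᵀμξ)/(α·m_ξ + s) and γ := ν + m·ζ. Define the directional derivative matrix M'(ξ) := α·[(ε⁻¹μν)(μξ)ᵀ + (ε⁻¹μξ)(μν)ᵀ] + 2(νᵀεξ)·I₃ − ν(εξ)ᵀ − ξ(εν)ᵀ. Then M(ξ)·γ + M'(ξ)·ξ = 0, i.e. γ is a generalised eigenvector of the matrix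 polynomial z ↦ M(ξ̃ + z·ν) at the root corresponding to ξ. -/
/-!
Write `ζ = ε⁻¹μξ`. Since `ε` is symmetric, `(εξ)ᵀζ = ξᵀμξ = 0`, so `ζ` is an eigenvector of
`M(ξ)` with eigenvalue `α m_ξ + s`. Using `ξᵀμξ = 0` and the symmetry of `ε` and `μ` once more,
`M(ξ)ν + M'(ξ)ξ = 2α (νᵀμξ) ζ`, and `m` is exactly the coefficient that cancels this.
-/

open Matrix

/-- The derivative `M'(ξ) = (d/dt) M(ξ + tν)|_{t=0}` of the matrix polynomial,
with `ν = e₃`. -/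
noncomputable def MH' (ε μ : Matrix (Fin 3) (Fin 3) ℝ) (ν ξ : Fin 3 → ℂ) :
    Matrix (Fin 3) (Fin 3) ℂ :=
  (Real.sqrt (ε.det / μ.det) : ℂ) •
      (vecMulVec (((ε.map Complex.ofReal)⁻¹ * μ.map Complex.ofReal).mulVec ν)
          ((μ.map Complex.ofReal).mulVec ξ)
        + vecMulVec (((ε.map Complex.ofReal)⁻¹ * μ.map Complex.ofReal).mulVec ξ)
            ((μ.map Complex.ofReal).mulVec ν))
    + (2 * (ν ⬝ᵥ (ε.map Complex.ofReal).mulVec ξ)) • (1 : Matrix (Fin 3) (Fin 3) ℂ)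
    - vecMulVec ν ((ε.map Complex.ofReal).mulVec ξ)
    - vecMulVec ξ ((ε.map Complex.ofReal).mulVec ν)

open Complex

theorem Matrix.IsSymm.mulVec_dotProduct {n R : Type*} [Fintype n] [CommSemiring R]
    {A : Matrix n n R} (hA : A.IsSymm) (x y : n → R) : A *ᵥ x ⬝ᵥ y = x ⬝ᵥ A *ᵥ y := by
  rw [dotProduct_mulVec, ← mulVec_transpose, hA.eq]

section MH

variable (ε μ : Matrix (Fin 3) (Fin 3) ℝ) (ν ξ : Fin 3 → ℂ)

theorem MH_mulVec (v : Fin 3 → ℂ) :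
    MH ε μ ξ *ᵥ v =
      (Real.sqrt (ε.det / μ.det) : ℂ) • (μ.map ofReal *ᵥ ξ ⬝ᵥ v) •
          ((ε.map ofReal)⁻¹ * μ.map ofReal) *ᵥ ξ
        + (ξ ⬝ᵥ ε.map ofReal *ᵥ ξ) • v - (ε.map ofReal *ᵥ ξ ⬝ᵥ v) • ξ := by
  simp only [MH, add_mulVec, sub_mulVec, smul_mulVec, one_mulVec, vecMulVec_mulVec,
    op_smul_eq_smul]

theorem MH'_mulVec (w : Fin 3 → ℂ) :
    MH' ε μ ν ξ *ᵥ w =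
      (Real.sqrt (ε.det / μ.det) : ℂ) •
          ((μ.map ofReal *ᵥ ξ ⬝ᵥ w) • ((ε.map ofReal)⁻¹ * μ.map ofReal) *ᵥ ν
            + (μ.map ofReal *ᵥ ν ⬝ᵥ w) • ((ε.map ofReal)⁻¹ * μ.map ofReal) *ᵥ ξ)
        + (2 * (ν ⬝ᵥ ε.map ofReal *ᵥ ξ)) • w
        - (ε.map ofReal *ᵥ ξ ⬝ᵥ w) • ν - (ε.map ofReal *ᵥ ν ⬝ᵥ w) • ξ := by
  simp only [MH', add_mulVec, sub_mulVec, smul_mulVec, one_mulVec, vecMulVec_mulVec,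
    op_smul_eq_smul]

variable {ε μ ν ξ}

theorem MH_mulVec_inv_mul_mulVec (hε : ε.IsSymm) (hεdet : ε.det ≠ 0) (hμ : μ.IsSymm)
    (hξ : ξ ⬝ᵥ μ.map ofReal *ᵥ ξ = 0) :
    MH ε μ ξ *ᵥ (((ε.map ofReal)⁻¹ * μ.map ofReal) *ᵥ ξ) =
      ((Real.sqrt (ε.det / μ.det) : ℂ) *
          (ξ ⬝ᵥ (μ.map ofReal * (ε.map ofReal)⁻¹ * μ.map ofReal) *ᵥ ξ)
        + ξ ⬝ᵥ ε.map ofReal *ᵥ ξ) • ((ε.map ofReal)⁻¹ * μ.map ofReal) *ᵥ ξ := by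
  have hdet : IsUnit (ε.map ofReal).det := by
    rw [show (ε.map ofReal).det = ε.det from (ofRealHom.map_det ε).symm]
    exact isUnit_iff_ne_zero.mpr (ofReal_ne_zero.mpr hεdet)
  have hεζ : ε.map ofReal *ᵥ (((ε.map ofReal)⁻¹ * μ.map ofReal) *ᵥ ξ) = μ.map ofReal *ᵥ ξ := by
    rw [mulVec_mulVec, ← Matrix.mul_assoc, mul_nonsing_inv _ hdet, Matrix.one_mul]
  have hm : μ.map ofReal *ᵥ ξ ⬝ᵥ ((ε.map ofReal)⁻¹ * μ.map ofReal) *ᵥ ξ =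
      ξ ⬝ᵥ (μ.map ofReal * (ε.map ofReal)⁻¹ * μ.map ofReal) *ᵥ ξ := by
    rw [(hμ.map _).mulVec_dotProduct, mulVec_mulVec, Matrix.mul_assoc]
  have hεξζ : ε.map ofReal *ᵥ ξ ⬝ᵥ ((ε.map ofReal)⁻¹ * μ.map ofReal) *ᵥ ξ = 0 := by
    rw [(hε.map _).mulVec_dotProduct, hεζ, hξ]
  rw [MH_mulVec, hm, hεξζ, zero_smul, sub_zero, smul_smul, ← add_smul]

theorem MH_mulVec_add_MH'_mulVec_self (hε : ε.IsSymm) (hμ : μ.IsSymm)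
    (hξ : ξ ⬝ᵥ μ.map ofReal *ᵥ ξ = 0) :
    MH ε μ ξ *ᵥ ν + MH' ε μ ν ξ *ᵥ ξ =
      (2 * (Real.sqrt (ε.det / μ.det) : ℂ) * (ν ⬝ᵥ μ.map ofReal *ᵥ ξ)) •
        ((ε.map ofReal)⁻¹ * μ.map ofReal) *ᵥ ξ := by
  have hμξν : μ.map ofReal *ᵥ ξ ⬝ᵥ ν = ν ⬝ᵥ μ.map ofReal *ᵥ ξ := dotProduct_comm _ _
  have hεξν : ε.map ofReal *ᵥ ξ ⬝ᵥ ν = ν ⬝ᵥ ε.map ofReal *ᵥ ξ := dotProduct_comm _ _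
  have hμξξ : μ.map ofReal *ᵥ ξ ⬝ᵥ ξ = 0 := by rw [dotProduct_comm, hξ]
  have hεξξ : ε.map ofReal *ᵥ ξ ⬝ᵥ ξ = ξ ⬝ᵥ ε.map ofReal *ᵥ ξ := dotProduct_comm _ _
  rw [MH_mulVec, MH'_mulVec, hμξν, hεξν, hμξξ, hεξξ, (hμ.map _).mulVec_dotProduct ν,
    (hε.map _).mulVec_dotProduct ν]
  module

end MH

/-- `γ = ν + m ζ` is a generalised eigenvector of the matrix polynomial
`z ↦ M(ξ̃ + zν)` at the root corresponding to `ξ`: `M(ξ)·γ + M'(ξ)·ξ = 0`. -/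
theorem MH_generalised_eigenvector (ε μ : Matrix (Fin 3) (Fin 3) ℝ) (hε : ε.PosDef)
    (hμ : μ.PosDef) (ξ : Fin 3 → ℂ)
    (hμξ : ξ ⬝ᵥ (μ.map Complex.ofReal).mulVec ξ = 0)
    (hne : (Real.sqrt (ε.det / μ.det) : ℂ) *
          (ξ ⬝ᵥ (μ.map Complex.ofReal * (ε.map Complex.ofReal)⁻¹ *
            μ.map Complex.ofReal).mulVec ξ)
        + ξ ⬝ᵥ (ε.map Complex.ofReal).mulVec ξ ≠ 0) :
    (MH ε μ ξ).mulVec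
        ((![0, 0, 1] : Fin 3 → ℂ)
          + (-(2 * (Real.sqrt (ε.det / μ.det) : ℂ) *
                ((![0, 0, 1] : Fin 3 → ℂ) ⬝ᵥ (μ.map Complex.ofReal).mulVec ξ))
              / ((Real.sqrt (ε.det / μ.det) : ℂ) *
                    (ξ ⬝ᵥ (μ.map Complex.ofReal * (ε.map Complex.ofReal)⁻¹ *
                      μ.map Complex.ofReal).mulVec ξ)
                  + ξ ⬝ᵥ (ε.map Complex.ofReal).mulVec ξ)) •
            ((ε.map Complex.ofReal)⁻¹ * μ.map Complex.ofReal).mulVec ξ)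
      + (MH' ε μ ![0, 0, 1] ξ).mulVec ξ = 0 := by
  have hεs : ε.IsSymm := isHermitian_iff_isSymm.mp hε.isHermitian
  have hμs : μ.IsSymm := isHermitian_iff_isSymm.mp hμ.isHermitian
  rw [mulVec_add, mulVec_smul, MH_mulVec_inv_mul_mulVec hεs hε.det_pos.ne' hμs hμξ,
    smul_smul, div_mul_cancel₀ _ hne, add_right_comm,
    MH_mulVec_add_MH'_mulVec_self hεs hμs hμξ, ← add_smul, add_neg_cancel, zero_smul]
end

section
/- Let ε̃ and μ̃ be real symmetric positive-definite 2×2 matrices, and let U ⊆ ℝ² be a nonempty open set. Suppose that for every ξ ∈ U, (ξᵀε̃ξ)²·det(μ̃) = (ξᵀμ̃ξ)²·det(ε̃). Then there exists a > 0 such that μ̃ = a·ε̃. -/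
/-!
On `U` both quadratic forms are nonnegative, so taking square roots turns the hypothesis into
`ξᵀμ̃ξ = a ξᵀε̃ξ` with `a = √(det μ̃ / det ε̃) > 0`. The quadratic form of the symmetric matrix
`μ̃ - a ε̃` therefore vanishes on a nonempty open set. Along any line through a point of `U` it
is a polynomial of degree at most two vanishing near `0`, so its leading coefficient vanishes;
hence the form vanishes everywhere, and by polarization `μ̃ - a ε̃ = 0`.
-/

open Matrix Filter Topology

theorem QuadraticMap.eq_zero_of_forall_mem_of_isOpen {V N : Type*} [AddCommGroup V]
    [Module ℝ V] [TopologicalSpace V] [ContinuousAdd V] [ContinuousSMul ℝ V] [AddCommGroup N]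
    [Module ℝ N] (Q : QuadraticMap ℝ V N) {U : Set V} (hU : IsOpen U) (hne : U.Nonempty)
    (h : ∀ x ∈ U, Q x = 0) : Q = 0 := by
  obtain ⟨x, hx⟩ := hne
  ext v
  show Q v = 0
  have hline : ∀ t : ℝ, Q (x + t • v) = t • polar Q x v + (t * t) • Q v := by
    intro t
    rw [QuadraticMap.map_add Q, QuadraticMap.map_smul, QuadraticMap.polar_smul_right, h x hx,
      zero_add, add_comm]
  have hnear : ∀ᶠ t in 𝓝 (0 : ℝ), x + t • v ∈ U ∧ x + (-t) • v ∈ U := by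
    have hmem : ∀ᶠ t in 𝓝 (0 : ℝ), x + t • v ∈ U :=
      (by fun_prop : Continuous fun t : ℝ => x + t • v).continuousAt.preimage_mem_nhds
        (by simpa using hU.mem_nhds hx)
    exact hmem.and ((continuous_neg.tendsto' 0 0 neg_zero).eventually hmem)
  obtain ⟨t, ⟨hpos, hneg⟩, ht⟩ := ((eventually_nhdsWithin_of_eventually_nhds hnear).and
    self_mem_nhdsWithin : ∀ᶠ t in 𝓝[≠] (0 : ℝ), _ ∧ t ≠ 0).exists
  have hQpos := h _ hpos
  have hQneg := h _ hneg
  rw [hline] at hQpos hQneg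
  have hsum : (2 * (t * t)) • Q v = 0 := by
    linear_combination (norm := module) hQpos + hQneg
  exact (smul_eq_zero.1 hsum).resolve_left (mul_ne_zero two_ne_zero (mul_self_ne_zero.2 ht))

theorem Matrix.toQuadraticForm'_apply {n R : Type*} [Fintype n] [DecidableEq n] [CommRing R]
    (M : Matrix n n R) (v : n → R) : M.toQuadraticForm' v = v ⬝ᵥ M *ᵥ v := by
  simp [Matrix.toQuadraticForm', toLinearMap₂'_apply']

theorem Matrix.eq_zero_of_isSymm_of_forall_dotProduct_mulVec_self {n K : Type*} [Fintype n]
    [DecidableEq n] [Field K] [NeZero (2 : K)] {M : Matrix n n K} (hM : M.IsSymm)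
    (h : ∀ v, v ⬝ᵥ M *ᵥ v = 0) : M = 0 := by
  ext i j
  have hdiag : ∀ k, M k k = 0 := fun k => by
    simpa [mulVec_single_one] using h (Pi.single k 1)
  have hpair := h (Pi.single i 1 + Pi.single j 1)
  simp only [mulVec_add, add_dotProduct, dotProduct_add, mulVec_single_one,
    single_one_dotProduct, col_apply, hdiag, hM.apply i j] at hpair
  have htwice : (2 : K) * M i j = 0 := by linear_combination hpair
  exact (mul_eq_zero.1 htwice).resolve_left two_ne_zero

theorem Real.eq_sqrt_div_mul_of_sq_mul_eq {x y a b : ℝ} (hx : 0 ≤ x) (hy : 0 ≤ y) (ha : a ≠ 0)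
    (h : x ^ 2 * b = y ^ 2 * a) : y = √(b / a) * x := by
  have hy2 : y ^ 2 = b / a * x ^ 2 := by field_simp; linarith
  rw [← Real.sqrt_sq hy, hy2, Real.sqrt_mul' _ (sq_nonneg x), Real.sqrt_sq hx]

/-- If `(ξᵀε̃ξ)² det μ̃ = (ξᵀμ̃ξ)² det ε̃` on a nonempty open set of frequencies `ξ`,
then the tangential metrics `ε̃` and `μ̃` are conformal multiples: `μ̃ = a ε̃` with `a > 0`. -/
theorem conformal_of_quartic_ratio (ε' μ' : Matrix (Fin 2) (Fin 2) ℝ)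
    (hε : ε'.PosDef) (hμ : μ'.PosDef) (U : Set (Fin 2 → ℝ)) (hU : IsOpen U)
    (hne : U.Nonempty)
    (h : ∀ ξ ∈ U, (ξ ⬝ᵥ ε'.mulVec ξ) ^ 2 * μ'.det = (ξ ⬝ᵥ μ'.mulVec ξ) ^ 2 * ε'.det) :
    ∃ a : ℝ, 0 < a ∧ μ' = a • ε' := by
  set a := √(μ'.det / ε'.det)
  have hform : (μ' - a • ε').toQuadraticForm' = 0 := by
    refine QuadraticMap.eq_zero_of_forall_mem_of_isOpen _ hU hne fun ξ hξ => ?_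
    rw [toQuadraticForm'_apply, sub_mulVec, smul_mulVec, dotProduct_sub, dotProduct_smul,
      smul_eq_mul, sub_eq_zero]
    exact Real.eq_sqrt_div_mul_of_sq_mul_eq (hε.posSemidef.dotProduct_mulVec_nonneg ξ)
      (hμ.posSemidef.dotProduct_mulVec_nonneg ξ) hε.det_pos.ne' (h ξ hξ)
  have hsymm : (μ' - a • ε').IsSymm :=
    (isHermitian_iff_isSymm.1 hμ.isHermitian).sub
      ((isHermitian_iff_isSymm.1 hε.isHermitian).smul a)
  refine ⟨a, Real.sqrt_pos.2 (div_pos hμ.det_pos hε.det_pos), sub_eq_zero.1 ?_⟩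
  exact eq_zero_of_isSymm_of_forall_dotProduct_mulVec_self hsymm
    fun v => by rw [← toQuadraticForm'_apply, hform]; rfl
end

section
/- Let ε̃ and μ̃ be real symmetric positive-definite 2×2 matrices which are NOT scalar multiples of each other, and let K ∈ ℝ. Suppose that for every ξ in some nonempty open subset U of ℝ² \ {0} and every η ∈ ℝ², K·[ (√(ξᵀε̃ξ)/√(ξᵀμ̃ξ))·( ηᵀμ̃η − (ξᵀμ̃η)²/(ξᵀμ̃ξ) ) − (√(ξᵀμ̃ξ)/√(ξᵀε̃ξ))·( ηᵀε̃η − (ξᵀε̃η)²/(ξᵀε̃ξ) ) ] = 0. Then K = 0. -/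
/-!
Suppose `K ≠ 0`. For a symmetric `2 × 2` matrix `M`, Lagrange's identity
`(ξᵀMξ)(ηᵀMη) - (ξᵀMη)² = det M · (ξ₀η₁ - ξ₁η₀)²` turns the bracket, tested against `η = ξ⊥`,
into `(ξᵀε̃ξ)² det μ̃ = (ξᵀμ̃ξ)² det ε̃`. So `ξᵀε̃ξ = t · ξᵀμ̃ξ` on `U` with
`t = √(det ε̃ / det μ̃)`. A quadratic form vanishing on a nonempty open set vanishes identically
(second differences at a point of the set recover it), hence `ε̃ = t μ̃`, contradicting the
assumption that the two are not proportional.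
-/

open Matrix Filter Topology

namespace Matrix

variable {n R : Type*} [Fintype n]

theorem eq_zero_of_isSymm_of_dotProduct_mulVec_self_eq_zero [DecidableEq n] [CommRing R]
    [NoZeroDivisors R] [CharZero R] {M : Matrix n n R} (hM : M.IsSymm)
    (h : ∀ v : n → R, v ⬝ᵥ M *ᵥ v = 0) : M = 0 := by
  have hdiag : ∀ i, M i i = 0 := fun i => by
    simpa [mulVec_single_one] using h (Pi.single i 1)
  ext i j
  have hsum := h (Pi.single i 1 + Pi.single j 1)
  simp only [mulVec_add, add_dotProduct, dotProduct_add, mulVec_single_one, single_dotProduct,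
    one_mul, col_apply, hdiag] at hsum
  have : (2 : R) * M i j = 0 := by rw [← hsum, hM.apply j i]; ring
  simpa using this

theorem dotProduct_mulVec_second_difference [CommRing R] (M : Matrix n n R) (x v : n → R) (s : R) :
    (x + s • v) ⬝ᵥ M *ᵥ (x + s • v) + (x - s • v) ⬝ᵥ M *ᵥ (x - s • v) - 2 * (x ⬝ᵥ M *ᵥ x)
      = 2 * s ^ 2 * (v ⬝ᵥ M *ᵥ v) := by
  simp only [mulVec_add, mulVec_sub, mulVec_smul, add_dotProduct, dotProduct_add, sub_dotProduct,
    dotProduct_sub, smul_dotProduct, dotProduct_smul, smul_eq_mul]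
  ring

theorem dotProduct_mulVec_self_eq_zero_of_isOpen {M : Matrix n n ℝ} {U : Set (n → ℝ)}
    (hU : IsOpen U) (hne : U.Nonempty) (h : ∀ x ∈ U, x ⬝ᵥ M *ᵥ x = 0) (v : n → ℝ) :
    v ⬝ᵥ M *ᵥ v = 0 := by
  obtain ⟨x, hx⟩ := hne
  have hnear : ∀ᶠ s : ℝ in 𝓝[≠] 0, x + s • v ∈ U ∧ x - s • v ∈ U := by
    refine nhdsWithin_le_nhds (Eventually.and ?_ ?_)
    · exact (Continuous.tendsto (by fun_prop) 0).eventually (hU.mem_nhds (by simpa using hx))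
    · exact (Continuous.tendsto (by fun_prop) 0).eventually (hU.mem_nhds (by simpa using hx))
  obtain ⟨s, ⟨hplus, hminus⟩, hs⟩ := (hnear.and self_mem_nhdsWithin).exists
  have key := dotProduct_mulVec_second_difference M x v s
  rw [h _ hplus, h _ hminus, h _ hx] at key
  have hs2 : (2 : ℝ) * s ^ 2 ≠ 0 := by simpa using hs
  exact (mul_eq_zero.mp (by linarith)).resolve_left hs2

theorem eq_of_isSymm_of_dotProduct_mulVec_eqOn_isOpen [DecidableEq n] {A B : Matrix n n ℝ}
    (hA : A.IsSymm) (hB : B.IsSymm) {U : Set (n → ℝ)} (hU : IsOpen U) (hne : U.Nonempty)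
    (h : ∀ x ∈ U, x ⬝ᵥ A *ᵥ x = x ⬝ᵥ B *ᵥ x) : A = B := by
  rw [← sub_eq_zero]
  refine eq_zero_of_isSymm_of_dotProduct_mulVec_self_eq_zero (hA.sub hB)
    (dotProduct_mulVec_self_eq_zero_of_isOpen hU hne fun x hx => ?_)
  rw [sub_mulVec, dotProduct_sub, h x hx, sub_self]

theorem sub_sq_div_dotProduct_mulVec_eq_det_mul [Field R] {M : Matrix (Fin 2) (Fin 2) R}
    (hM : M.IsSymm) {ξ : Fin 2 → R} (hξ : ξ ⬝ᵥ M *ᵥ ξ ≠ 0) (η : Fin 2 → R) :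
    η ⬝ᵥ M *ᵥ η - (ξ ⬝ᵥ M *ᵥ η) ^ 2 / (ξ ⬝ᵥ M *ᵥ ξ)
      = M.det * (ξ 0 * η 1 - ξ 1 * η 0) ^ 2 / (ξ ⬝ᵥ M *ᵥ ξ) := by
  rw [eq_div_iff hξ, sub_mul, div_mul_cancel₀ _ hξ]
  simp only [dotProduct, mulVec, Fin.sum_univ_two, det_fin_two, hM.apply 0 1]
  ring

end Matrix

theorem sq_mul_eq_sq_mul_of_sqrt_div_mul_sub_eq_zero {a b p q : ℝ} (ha : 0 < a) (hb : 0 < b)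
    (h : √a / √b * (p / b) - √b / √a * (q / a) = 0) : a ^ 2 * p = b ^ 2 * q := by
  obtain ⟨x, hx, rfl⟩ : ∃ x, 0 < x ∧ a = x ^ 2 := ⟨√a, by positivity, (Real.sq_sqrt ha.le).symm⟩
  obtain ⟨y, hy, rfl⟩ : ∃ y, 0 < y ∧ b = y ^ 2 := ⟨√b, by positivity, (Real.sq_sqrt hb.le).symm⟩
  rw [Real.sqrt_sq hx.le, Real.sqrt_sq hy.le] at h
  field_simp at h
  linear_combination h

theorem eq_sqrt_div_mul_of_sq_mul_eq_sq_mul {a b p q : ℝ} (ha : 0 ≤ a) (hb : 0 ≤ b) (hp : 0 < p)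
    (hq : 0 ≤ q) (h : a ^ 2 * p = b ^ 2 * q) : a = √(q / p) * b := by
  rw [← sq_eq_sq₀ ha (by positivity), mul_pow, Real.sq_sqrt (by positivity)]
  field_simp
  linear_combination h

/-- If `ε̃` and `μ̃` are positive definite but not scalar multiples of each other, and
`K` multiplied by the bracketed expression vanishes for all `ξ` in a nonempty open set
of nonzero frequencies and all `η`, then `K = 0`. -/
theorem coefficient_vanishes (ε' μ' : Matrix (Fin 2) (Fin 2) ℝ)
    (hε : ε'.PosDef) (hμ : μ'.PosDef) (hmult : ¬ ∃ c : ℝ, μ' = c • ε')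
    (K : ℝ) (U : Set (Fin 2 → ℝ)) (hU : IsOpen U) (hne : U.Nonempty)
    (hU0 : U ⊆ {ξ : Fin 2 → ℝ | ξ ≠ 0})
    (h : ∀ ξ ∈ U, ∀ η : Fin 2 → ℝ,
        K * ((Real.sqrt (ξ ⬝ᵥ ε'.mulVec ξ) / Real.sqrt (ξ ⬝ᵥ μ'.mulVec ξ)) *
              (η ⬝ᵥ μ'.mulVec η - (ξ ⬝ᵥ μ'.mulVec η) ^ 2 / (ξ ⬝ᵥ μ'.mulVec ξ))
            - (Real.sqrt (ξ ⬝ᵥ μ'.mulVec ξ) / Real.sqrt (ξ ⬝ᵥ ε'.mulVec ξ)) *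
              (η ⬝ᵥ ε'.mulVec η - (ξ ⬝ᵥ ε'.mulVec η) ^ 2 / (ξ ⬝ᵥ ε'.mulVec ξ))) = 0) :
    K = 0 := by
  by_contra hK
  have hεs : ε'.IsSymm := isHermitian_iff_isSymm.mp hε.isHermitian
  have hμs : μ'.IsSymm := isHermitian_iff_isSymm.mp hμ.isHermitian
  have pos : ∀ {M : Matrix (Fin 2) (Fin 2) ℝ}, M.PosDef → ∀ ξ ∈ U, 0 < ξ ⬝ᵥ M *ᵥ ξ :=
    fun hM ξ hξ => by simpa using hM.dotProduct_mulVec_pos (hU0 hξ)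
  have hquartic : ∀ ξ ∈ U, (ξ ⬝ᵥ ε' *ᵥ ξ) ^ 2 * μ'.det = (ξ ⬝ᵥ μ' *ᵥ ξ) ^ 2 * ε'.det := by
    intro ξ hξ
    -- `η = ξ⊥` makes the cross product `ξ 0 * η 1 - ξ 1 * η 0 = |ξ|²` nonzero.
    have hcross : (ξ 0 * ξ 0 - ξ 1 * -ξ 1) ^ 2 ≠ 0 := by
      have : ξ ⬝ᵥ ξ ≠ 0 := mt dotProduct_self_eq_zero.mp (hU0 hξ)
      simpa [dotProduct, Fin.sum_univ_two] using this
    have hbracket := (mul_eq_zero.mp (h ξ hξ ![-ξ 1, ξ 0])).resolve_left hK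
    rw [sub_sq_div_dotProduct_mulVec_eq_det_mul hμs (pos hμ ξ hξ).ne',
      sub_sq_div_dotProduct_mulVec_eq_det_mul hεs (pos hε ξ hξ).ne'] at hbracket
    have hsq := sq_mul_eq_sq_mul_of_sqrt_div_mul_sub_eq_zero (pos hε ξ hξ) (pos hμ ξ hξ) hbracket
    simp only [cons_val_zero, cons_val_one] at hsq
    exact mul_right_cancel₀ hcross (by linear_combination hsq)
  set t := √(ε'.det / μ'.det)
  have hratio : ∀ ξ ∈ U, ξ ⬝ᵥ ε' *ᵥ ξ = ξ ⬝ᵥ (t • μ') *ᵥ ξ := fun ξ hξ => by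
    rw [smul_mulVec, dotProduct_smul, smul_eq_mul]
    exact eq_sqrt_div_mul_of_sq_mul_eq_sq_mul (pos hε ξ hξ).le (pos hμ ξ hξ).le hμ.det_pos
      hε.det_pos.le (hquartic ξ hξ)
  have hεμ := eq_of_isSymm_of_dotProduct_mulVec_eqOn_isOpen hεs (hμs.smul t) hU hne hratio
  have ht : t ≠ 0 := (Real.sqrt_pos.mpr (div_pos hε.det_pos hμ.det_pos)).ne'
  exact hmult ⟨t⁻¹, by rw [hεμ, smul_smul, inv_mul_cancel₀ ht, one_smul]⟩
end

section
/- Let ε̃ be a real symmetric positive-definite 2×2 matrix, w = (w₁,w₂) ∈ ℝ², and t > 0. Define the 3×3 matrix Â in block form by: Â_{ij} = ε̃_{ij} + w_i w_j/t² for i,j ∈ {1,2}; Â_{i3} = Â_{3i} = −w_i/t^{3/2} for i ∈ {1,2}; Â₃₃ = 1/t. Then: (i) Â is symmetric positive definite; (ii) for every nonzero ξ̃ = (ξ₁,ξ₂) ∈ ℝ², the unique root with positive imaginary part of the quadratic z ↦ (ξ₁,ξ₂,z)ᵀ Â (ξ₁,ξ₂,z) is z₊ = (w₁ξ₁ + w₂ξ₂)/√t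 + i·√t·√(ξ̃ᵀε̃ξ̃). -/
open Matrix

/-- The metric `ε̂` in boundary normal coordinates for `μ̂`:
`Â_{ij} = ε̃_{ij} + wᵢwⱼ/t²`, `Â_{i3} = Â_{3i} = −wᵢ/t^{3/2}`, `Â₃₃ = 1/t`. -/
noncomputable def Ahat (ε' : Matrix (Fin 2) (Fin 2) ℝ) (w : Fin 2 → ℝ) (t : ℝ) :
    Matrix (Fin 3) (Fin 3) ℝ :=
  !![ε' 0 0 + w 0 * w 0 / t ^ 2, ε' 0 1 + w 0 * w 1 / t ^ 2, -w 0 / (t * Real.sqrt t);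
     ε' 1 0 + w 1 * w 0 / t ^ 2, ε' 1 1 + w 1 * w 1 / t ^ 2, -w 1 / (t * Real.sqrt t);
     -w 0 / (t * Real.sqrt t), -w 1 / (t * Real.sqrt t), 1 / t]

/-- The complex covector `ξ(z) = (ξ₁, ξ₂, z)`. -/
noncomputable def cvec (ξt : Fin 2 → ℝ) (z : ℂ) : Fin 3 → ℂ :=
  ![(ξt 0 : ℂ), (ξt 1 : ℂ), z]

/-! Completing the square in the normal variable gives, over any field `K ⊇ ℝ`,
`vᵀ Â v = (v₁, v₂)ᵀ ε̃ (v₁, v₂) + ((w₁v₁ + w₂v₂)/t - v₃/√t)²`.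
Over `ℝ` this makes `Â` positive definite. Over `ℂ`, with `v = (ξ̃, z)` and `Q = ξ̃ᵀε̃ξ̃ > 0`, it reads
`t · vᵀ Â v = (z - c)² + t Q` with `c = (w₁ξ₁ + w₂ξ₂)/√t`, whose roots are `c ± i √t √Q`. -/

theorem dotProduct_Ahat_mulVec {K : Type*} [Field K] [Algebra ℝ K]
    (ε' : Matrix (Fin 2) (Fin 2) ℝ) (w : Fin 2 → ℝ) {t : ℝ} (ht : 0 ≤ t) (v : Fin 3 → K) :
    v ⬝ᵥ (Ahat ε' w t).map (algebraMap ℝ K) *ᵥ v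
      = ![v 0, v 1] ⬝ᵥ ε'.map (algebraMap ℝ K) *ᵥ ![v 0, v 1]
        + (algebraMap ℝ K (w 0 / t) * v 0 + algebraMap ℝ K (w 1 / t) * v 1
            - algebraMap ℝ K (√t)⁻¹ * v 2) ^ 2 := by
  obtain ⟨s, hs, rfl⟩ : ∃ s, 0 ≤ s ∧ t = s ^ 2 :=
    ⟨√t, Real.sqrt_nonneg t, (Real.sq_sqrt ht).symm⟩
  simp only [dotProduct, mulVec, Ahat, Real.sqrt_sq hs, one_div, map_apply, of_apply, cons_val',
    cons_val_fin_one, Fin.sum_univ_three, cons_val_zero, cons_val_one, cons_val, map_add, map_div₀,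
    map_mul, map_pow, map_neg, map_inv₀, Fin.sum_univ_two]
  ring

theorem Ahat_isHermitian {ε' : Matrix (Fin 2) (Fin 2) ℝ} (hε : ε'.IsSymm) (w : Fin 2 → ℝ) (t : ℝ) :
    (Ahat ε' w t).IsHermitian := by
  have h10 : ε' 1 0 = ε' 0 1 := hε.apply 0 1
  ext i j
  fin_cases i <;> fin_cases j <;> simp [Ahat, h10, mul_comm]

theorem Ahat_posDef {ε' : Matrix (Fin 2) (Fin 2) ℝ} (hε : ε'.PosDef) (w : Fin 2 → ℝ) {t : ℝ}
    (ht : 0 < t) : (Ahat ε' w t).PosDef := by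
  have hsymm : (Ahat ε' w t).IsHermitian :=
    Ahat_isHermitian (isHermitian_iff_isSymm.mp hε.isHermitian) w t
  refine .of_dotProduct_mulVec_pos hsymm fun x hx ↦ ?_
  have := dotProduct_Ahat_mulVec (K := ℝ) ε' w ht.le x
  simp only [Algebra.algebraMap_self, RingHom.id_apply, RingHom.coe_id, map_id] at this
  rw [star_trivial, this]
  by_cases hx01 : ![x 0, x 1] = 0
  · have hx2 : x 2 ≠ 0 := fun hx2 ↦ hx <| by
      ext i; fin_cases i
      exacts [congrFun hx01 0, congrFun hx01 1, hx2]
    have h0 : x 0 = 0 := congrFun hx01 0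
    have h1 : x 1 = 0 := congrFun hx01 1
    rw [hx01, zero_dotProduct, zero_add, h0, h1]
    simp only [mul_zero, zero_add, zero_sub, neg_sq]
    exact sq_pos_of_ne_zero (mul_ne_zero (by positivity) hx2)
  · have := hε.dotProduct_mulVec_pos hx01
    rw [star_trivial] at this
    positivity

theorem Complex.im_pos_and_sub_sq_add_sq_eq_zero_iff {c ρ : ℝ} (hρ : 0 < ρ) (z : ℂ) :
    (0 < z.im ∧ (z - c) ^ 2 + (ρ : ℂ) ^ 2 = 0) ↔ z = c + I * ρ := by
  have hsq : (z - c) ^ 2 + (ρ : ℂ) ^ 2 = 0 ↔ (z - c) ^ 2 = (I * ρ) ^ 2 := by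
    rw [mul_pow, I_sq, neg_one_mul, ← sub_neg_eq_add, sub_eq_zero]
  rw [hsq, sq_eq_sq_iff_eq_or_eq_neg, sub_eq_iff_eq_add', sub_eq_iff_eq_add']
  constructor
  · rintro ⟨him, rfl | rfl⟩
    · rfl
    · simp only [add_im, ofReal_im, neg_im, mul_im, I_re, mul_zero, I_im, ofReal_re, one_mul,
        zero_add, Left.neg_pos_iff] at him
      linarith
  · rintro rfl
    simpa using hρ

theorem cvec_dotProduct_Ahat_mulVec (ε' : Matrix (Fin 2) (Fin 2) ℝ) (w : Fin 2 → ℝ) {t : ℝ}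
    (ht : 0 < t) (ξt : Fin 2 → ℝ) (z : ℂ) :
    cvec ξt z ⬝ᵥ (Ahat ε' w t).map Complex.ofReal *ᵥ cvec ξt z
      = ((z - ((w 0 * ξt 0 + w 1 * ξt 1) / √t : ℝ)) ^ 2 + t * (ξt ⬝ᵥ ε' *ᵥ ξt : ℝ)) / t := by
  rw [← Complex.coe_algebraMap, dotProduct_Ahat_mulVec ε' w ht.le]
  obtain ⟨s, hs, rfl⟩ : ∃ s, 0 < s ∧ t = s ^ 2 :=
    ⟨√t, Real.sqrt_pos.2 ht, (Real.sq_sqrt ht.le).symm⟩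
  have hs0 : (s : ℂ) ≠ 0 := by exact_mod_cast hs.ne'
  simp only [cvec, dotProduct, mulVec, Fin.sum_univ_two, cons_val_zero, cons_val_one, cons_val,
    cons_val_fin_one, map_apply, Complex.coe_algebraMap, map_div₀, map_inv₀, Complex.ofReal_pow,
    Complex.ofReal_add, Complex.ofReal_mul, Real.sqrt_sq hs.le]
  field_simp
  ring

/-- `Â` is symmetric positive definite, and for each nonzero tangential frequency `ξ̃`
the unique root with positive imaginary part of `z ↦ ξ(z)ᵀ Â ξ(z)` is
`z₊ = (w₁ξ₁ + w₂ξ₂)/√t + i √t √(ξ̃ᵀε̃ξ̃)`. -/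
theorem Ahat_posDef_and_root (ε' : Matrix (Fin 2) (Fin 2) ℝ) (hε : ε'.PosDef)
    (w : Fin 2 → ℝ) (t : ℝ) (ht : 0 < t) :
    (Ahat ε' w t).PosDef
      ∧ ∀ ξt : Fin 2 → ℝ, ξt ≠ 0 → ∀ z : ℂ,
          (0 < z.im ∧
              cvec ξt z ⬝ᵥ ((Ahat ε' w t).map Complex.ofReal).mulVec (cvec ξt z) = 0)
            ↔ z = (Complex.ofReal ((w 0 * ξt 0 + w 1 * ξt 1) / Real.sqrt t)
                + Complex.I * Complex.ofReal
                   (Real.sqrt t * Real.sqrt (ξt ⬝ᵥ ε'.mulVec ξt))) := by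
  refine ⟨Ahat_posDef hε w ht, fun ξt hξ z ↦ ?_⟩
  have hQ : 0 < ξt ⬝ᵥ ε' *ᵥ ξt := by simpa using hε.dotProduct_mulVec_pos hξ
  rw [← Complex.im_pos_and_sub_sq_add_sq_eq_zero_iff (by positivity),
    cvec_dotProduct_Ahat_mulVec ε' w ht, div_eq_zero_iff,
    or_iff_left (Complex.ofReal_ne_zero.mpr ht.ne'), ← Complex.ofReal_pow, mul_pow,
    Real.sq_sqrt ht.le, Real.sq_sqrt hQ.le, Complex.ofReal_mul]
end
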